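/- Let n ≥ 1, let α₁, …, αₙ ∈ ℝ, and let f : ℝ → ℝ be bounded and continuous. If Δ_{α₁}⋯Δ_{αₙ} f = 0, then there exist bounded continuous functions f₁, …, fₙ : ℝ → ℝ with fⱼ αⱼ-periodic for each j and f = f₁ + ⋯ + fₙ. In other words, the space BC(ℝ) of bounded continuous real functions has the decomposition property. -/

import Mathlib

/-!
Induction on `n`. If `Δ_a Δ_l f = 0`, then `F = Δ_l f` is `a`-periodic, and so is the mean `u` of
`f` along the orbits of `x ↦ x + a` (an ultrafilter limit of Cesàro averages); as this mean commutes
with differences and fixes `F`, also `Δ_l u = F`. It suffices to replace `u` by a continuous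
`a`-periodic `g` with `Δ_l g = F`, for then `f - g` satisfies the hypothesis for `l`.

This is done one difference `Δ_β` at a time. If `β / a` is rational, then `p β ∈ ℤ a` for some
`p ≥ 1`, and `Δ_β` is inverted explicitly by a weighted sum of `p` translates. If `β / a` is
irrational, a Gottschalk–Hedlund argument applies: for bounded `a`-periodic `D` with `Δ_β D`
continuous, `D - sup_k D (· + k β)` is continuous, because the sum of the lower semicontinuous
functions `sup_k D (· + k β) - D` and `sup_k (-D) (· + k β) + D` is invariant under the dense group
`ℤ β + ℤ a`, hence constant.
-/

/-- The difference operator `Δ_α f (x) = f (x + α) - f x`. -/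
def deltaOp (α : ℝ) (f : ℝ → ℝ) : ℝ → ℝ := fun x => f (x + α) - f x

open Filter Function Finset Topology

lemma deltaOp_eq_zero_iff {a : ℝ} {f : ℝ → ℝ} : deltaOp a f = 0 ↔ Periodic f a := by
  simp only [funext_iff, deltaOp, Pi.zero_apply, sub_eq_zero, Periodic]

lemma deltaOp_sub (γ : ℝ) (f g : ℝ → ℝ) : deltaOp γ (f - g) = deltaOp γ f - deltaOp γ g := by
  ext x; simp only [deltaOp, Pi.sub_apply]; ring

lemma deltaOp_comm (β γ : ℝ) (f : ℝ → ℝ) :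
    deltaOp β (deltaOp γ f) = deltaOp γ (deltaOp β f) := by
  ext x; simp only [deltaOp, add_right_comm x β γ]; ring

lemma Continuous.deltaOp {f : ℝ → ℝ} (hf : Continuous f) (γ : ℝ) : Continuous (deltaOp γ f) :=
  (hf.comp (continuous_add_const γ)).sub hf

lemma Function.Periodic.deltaOp {f : ℝ → ℝ} {a : ℝ} (hf : Periodic f a) (γ : ℝ) :
    Periodic (deltaOp γ f) a := fun x => by
  simp only [_root_.deltaOp, add_right_comm x a γ, hf _]

lemma abs_deltaOp_le {f : ℝ → ℝ} {M : ℝ} (hf : ∀ x, |f x| ≤ M) (γ x : ℝ) :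
    |deltaOp γ f x| ≤ 2 * M :=
  (abs_sub _ _).trans (by linarith [hf (x + γ), hf x])

lemma continuous_deltaOp_intCast_mul {D : ℝ → ℝ} {β : ℝ} (hD : Continuous (deltaOp β D)) (k : ℤ) :
    Continuous (deltaOp (k * β) D) := by
  have step : ∀ k : ℤ, deltaOp ((k + 1 : ℤ) * β) D =
      deltaOp (k * β) D + fun x => deltaOp β D (x + k * β) := fun k => by
    ext x; simp only [deltaOp, Pi.add_apply]; push_cast; ring_nf
  have hshift : ∀ k : ℤ, Continuous fun x => deltaOp β D (x + k * β) :=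
    fun k => hD.comp (continuous_add_const _)
  induction k using Int.induction_on with
  | zero =>
    convert continuous_const (y := (0 : ℝ)) using 1
    ext x; simp [deltaOp]
  | succ k ih => rw [step]; exact ih.add (hshift k)
  | pred k ih =>
    have h := step (-k - 1)
    rw [sub_add_cancel] at h
    rw [eq_sub_of_add_eq h.symm]
    exact ih.sub (hshift _)

lemma foldr_deltaOp_induction {P : (ℝ → ℝ) → Prop} (hP : ∀ γ f, P f → P (deltaOp γ f))
    (l : List ℝ) {f : ℝ → ℝ} (hf : P f) : P (l.foldr deltaOp f) := by
  induction l with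
  | nil => exact hf
  | cons γ l ih => exact hP γ _ ih

lemma foldr_deltaOp_comm {P : (ℝ → ℝ) → Prop} {T : (ℝ → ℝ) → ℝ → ℝ}
    (hP : ∀ γ f, P f → P (deltaOp γ f)) (hT : ∀ γ f, P f → T (deltaOp γ f) = deltaOp γ (T f))
    (l : List ℝ) {f : ℝ → ℝ} (hf : P f) : l.foldr deltaOp (T f) = T (l.foldr deltaOp f) := by
  induction l with
  | nil => rfl
  | cons γ l ih =>
    rw [List.foldr_cons, List.foldr_cons, ih, hT γ _ (foldr_deltaOp_induction hP l hf)]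

lemma foldr_deltaOp_sub (l : List ℝ) (f g : ℝ → ℝ) :
    l.foldr deltaOp (f - g) = l.foldr deltaOp f - l.foldr deltaOp g := by
  induction l with
  | nil => rfl
  | cons γ l ih => rw [List.foldr_cons, ih, deltaOp_sub]; rfl

lemma foldr_deltaOp_bounded {f : ℝ → ℝ} (hf : ∃ C, ∀ x, |f x| ≤ C) (l : List ℝ) :
    ∃ C, ∀ x, |l.foldr deltaOp f x| ≤ C :=
  foldr_deltaOp_induction (P := fun g => ∃ C, ∀ x, |g x| ≤ C)
    (fun γ _ ⟨M, hM⟩ => ⟨2 * M, abs_deltaOp_le hM γ⟩) l hf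

lemma foldr_deltaOp_deltaOp (l : List ℝ) (β : ℝ) (f : ℝ → ℝ) :
    l.foldr deltaOp (deltaOp β f) = deltaOp β (l.foldr deltaOp f) :=
  foldr_deltaOp_comm (P := fun _ => True) (fun _ _ _ => trivial)
    (fun γ f _ => deltaOp_comm β γ f) l trivial

lemma Function.Periodic.bounded_of_continuous {f : ℝ → ℝ} {a : ℝ} (hf : Periodic f a)
    (ha : a ≠ 0) (hc : Continuous f) : ∃ C, ∀ x, |f x| ≤ C := by
  obtain ⟨C, hC⟩ := isBounded_iff_forall_norm_le.1 (hf.isBounded_of_continuous ha hc)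
  exact ⟨C, fun x => hC _ ⟨x, rfl⟩⟩

lemma Function.Periodic.uniformContinuous_of_continuous {f : ℝ → ℝ} {a : ℝ} (hf : Periodic f a)
    (ha : a ≠ 0) (hc : Continuous f) : UniformContinuous f := by
  have hp : Periodic f |a| := by
    rcases abs_choice a with h | h <;> rw [h]
    exacts [hf, hf.neg]
  have : Fact (0 < |a|) := ⟨abs_pos.2 ha⟩
  have hlift : Continuous (hp.lift : AddCircle |a| → ℝ) := continuous_quot_lift _ hc
  have hmk : UniformContinuous ((↑) : ℝ → AddCircle |a|) :=
    (AddMonoidHomClass.lipschitz_of_bound (QuotientAddGroup.mk' (AddSubgroup.zmultiples |a|)) 1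
      fun x => by rw [one_mul]; exact QuotientAddGroup.norm_mk_le_norm).uniformContinuous
  exact (CompactSpace.uniformContinuous_of_continuous hlift).comp hmk

lemma upperSemicontinuous_of_lowerSemicontinuous_neg {X : Type*} [TopologicalSpace X]
    {f : X → ℝ} (hf : LowerSemicontinuous (-f)) : UpperSemicontinuous f := fun x y hy => by
  filter_upwards [hf x (-y) (by simpa using hy)] with z hz
  simpa using hz

lemma LowerSemicontinuous.eq_of_dense_periods {X γ : Type*} [TopologicalSpace X] [AddGroup X]
    [ContinuousAdd X] [LinearOrder γ] {d : X → γ} (hd : LowerSemicontinuous d) {S : Set X}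
    (hS : Dense (AddSubgroup.closure S : Set X)) (hper : ∀ s ∈ S, Periodic d s) (x y : X) :
    d x = d y := by
  have hG : ∀ g ∈ AddSubgroup.closure S, Periodic d g := fun g hg => by
    induction hg using AddSubgroup.closure_induction with
    | mem s hs => exact hper s hs
    | zero => simp [Periodic]
    | add g h _ _ hg hh => exact hg.add_period hh
    | neg g _ hg => exact hg.neg
  have key : ∀ x y : X, d y ≤ d x := fun x y => by
    by_contra! hlt
    have hnhds : ∀ᶠ g in 𝓝 (-x + y), d x < d (x + g) := by
      have := (continuous_const_add x).tendsto (-x + y)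
      rw [add_neg_cancel_left] at this
      exact this.eventually (hd y (d x) hlt)
    obtain ⟨g, hgx, hg⟩ := mem_closure_iff_nhds.1 (hS (-x + y)) _ hnhds
    exact (hgx.trans_eq (hG g hg x)).false
  exact le_antisymm (key y x) (key x y)

noncomputable def orbitSup (D : ℝ → ℝ) (β x : ℝ) : ℝ := ⨆ k : ℤ, D (x + k * β)

section OrbitSup

variable {D : ℝ → ℝ} {β M : ℝ}

lemma bddAbove_range_orbit (hD : ∀ x, |D x| ≤ M) (x : ℝ) :
    BddAbove (Set.range fun k : ℤ => D (x + k * β)) :=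
  ⟨M, by rintro _ ⟨k, rfl⟩; exact (abs_le.1 (hD _)).2⟩

lemma abs_orbitSup_le (hD : ∀ x, |D x| ≤ M) (x : ℝ) : |orbitSup D β x| ≤ M := by
  refine abs_le.2 ⟨?_, ciSup_le fun k => (abs_le.1 (hD _)).2⟩
  exact le_ciSup_of_le (bddAbove_range_orbit hD x) 0 (by simpa using (abs_le.1 (hD x)).1)

lemma periodic_orbitSup (D : ℝ → ℝ) (β : ℝ) : Periodic (orbitSup D β) β := fun x => by
  rw [orbitSup, orbitSup, ← (Equiv.addRight (1 : ℤ)).iSup_comp (g := fun k : ℤ => D (x + k * β))]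
  congr 1; ext k
  simp only [Equiv.coe_addRight, Int.cast_add, Int.cast_one]
  congr 1; ring

lemma Function.Periodic.orbitSup {a : ℝ} (h : Periodic D a) (β : ℝ) :
    Periodic (orbitSup D β) a := fun x => by
  simp only [_root_.orbitSup, add_right_comm x a, h _]

lemma lowerSemicontinuous_orbitSup_sub (hD : ∀ x, |D x| ≤ M) (hF : Continuous (deltaOp β D)) :
    LowerSemicontinuous (orbitSup D β - D) := by
  have h : orbitSup D β - D = fun x => ⨆ k : ℤ, deltaOp (k * β) D x := by
    ext x
    exact (OrderIso.subRight (D x)).map_ciSup (bddAbove_range_orbit hD x)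
  rw [h]
  refine lowerSemicontinuous_ciSup (fun x => ⟨2 * M, ?_⟩)
    fun k => (continuous_deltaOp_intCast_mul hF k).lowerSemicontinuous
  rintro _ ⟨k, rfl⟩
  exact (abs_le.1 (abs_deltaOp_le hD _ _)).2

/-- A Gottschalk–Hedlund theorem for the rotation by `β` on `ℝ / a ℤ`. -/
theorem continuous_sub_orbitSup {a : ℝ} (hdense : Dense (AddSubgroup.closure {β, a} : Set ℝ))
    (hD : ∀ x, |D x| ≤ M) (hDa : Periodic D a) (hF : Continuous (deltaOp β D)) :
    Continuous (D - orbitSup D β) := by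
  have hD' : ∀ x, |(-D) x| ≤ M := fun x => by simpa using hD x
  have hDa' : Periodic (-D) a := fun x => by simp only [Pi.neg_apply, hDa x]
  have hF' : Continuous (deltaOp β (-D)) := by
    convert hF.neg using 1; ext x; simp only [deltaOp, Pi.neg_apply]; ring
  have hlsc := lowerSemicontinuous_orbitSup_sub hD hF
  have hlsc' := lowerSemicontinuous_orbitSup_sub hD' hF'
  have hsum : LowerSemicontinuous (orbitSup D β + orbitSup (-D) β) := by
    have e : (fun x => (orbitSup D β - D) x + (orbitSup (-D) β - -D) x) =
        orbitSup D β + orbitSup (-D) β := by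
      ext x; simp only [Pi.add_apply, Pi.sub_apply, Pi.neg_apply]; ring
    exact e ▸ hlsc.add hlsc'
  have hper : ∀ s ∈ ({β, a} : Set ℝ), Periodic (orbitSup D β + orbitSup (-D) β) s := by
    rintro s (rfl | hs)
    · exact (periodic_orbitSup _ _).add (periodic_orbitSup _ _)
    · rw [Set.mem_singleton_iff.1 hs]
      exact (hDa.orbitSup _).add (hDa'.orbitSup _)
  -- `D - orbitSup D β` is upper semicontinuous by `hlsc`, and differs from the lower
  -- semicontinuous `orbitSup (-D) β + D` by a `β`- and `a`-invariant function, constant by density.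
  have hconst : D - orbitSup D β =
      fun x => (orbitSup (-D) β - -D) x + -(orbitSup D β + orbitSup (-D) β) 0 := by
    ext x
    have := hsum.eq_of_dense_periods hdense hper x 0
    simp only [Pi.add_apply, Pi.sub_apply, Pi.neg_apply] at this ⊢
    linarith
  refine continuous_iff_lower_upperSemicontinuous.2 ⟨?_, ?_⟩
  · rw [hconst]; exact hlsc'.add continuous_const.lowerSemicontinuous
  · exact upperSemicontinuous_of_lowerSemicontinuous_neg (by rwa [neg_sub])

end OrbitSup

lemma Ultrafilter.tendsto_limUnder_of_abs_le {ι : Type*} (𝒰 : Ultrafilter ι) {u : ι → ℝ} {M : ℝ}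
    (hu : ∀ i, |u i| ≤ M) : Tendsto u 𝒰 (𝓝 (limUnder 𝒰 u)) := by
  obtain ⟨L, -, hL⟩ := isCompact_Icc.ultrafilter_le_nhds (𝒰.map u)
    (le_principal_iff.2 (mem_map.2 (univ_mem' fun i => abs_le.1 (hu i))))
  exact tendsto_nhds_limUnder ⟨L, hL⟩

noncomputable def orbitAvg (b : ℝ) (g : ℝ → ℝ) (x : ℝ) (N : ℕ) : ℝ :=
  (∑ k ∈ range N, g (x + k * b)) / N

/-- The limit of the Cesàro averages along a fixed ultrafilter finer than `atTop`. It exists for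
bounded `g` (for unbounded `g` it is a junk value), and is then a translation invariant mean. -/
noncomputable def orbitMean (b : ℝ) (g : ℝ → ℝ) (x : ℝ) : ℝ :=
  limUnder (Ultrafilter.of (atTop : Filter ℕ) : Filter ℕ) (orbitAvg b g x)

section OrbitMean

variable {b M : ℝ} {g : ℝ → ℝ}

lemma abs_orbitAvg_le (hg : ∀ x, |g x| ≤ M) (x : ℝ) (N : ℕ) : |orbitAvg b g x N| ≤ M := by
  rcases Nat.eq_zero_or_pos N with rfl | hN
  · simpa [orbitAvg] using (abs_nonneg _).trans (hg 0)
  rw [orbitAvg, abs_div, Nat.abs_cast, div_le_iff₀ (by positivity)]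
  calc |∑ k ∈ range N, g (x + k * b)| ≤ ∑ k ∈ range N, |g (x + k * b)| := abs_sum_le_sum_abs _ _
    _ ≤ ∑ _k ∈ range N, M := sum_le_sum fun k _ => hg _
    _ = M * N := by simp [mul_comm]

lemma tendsto_orbitMean (hg : ∀ x, |g x| ≤ M) (x : ℝ) :
    Tendsto (orbitAvg b g x) (Ultrafilter.of (atTop : Filter ℕ)) (𝓝 (orbitMean b g x)) :=
  Ultrafilter.tendsto_limUnder_of_abs_le _ (abs_orbitAvg_le hg x)

lemma orbitMean_eq_of_tendsto {x L : ℝ} (h : Tendsto (orbitAvg b g x) atTop (𝓝 L)) :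
    orbitMean b g x = L :=
  (h.mono_left (Ultrafilter.of_le _)).limUnder_eq

lemma abs_orbitMean_le (hg : ∀ x, |g x| ≤ M) (x : ℝ) : |orbitMean b g x| ≤ M :=
  le_of_tendsto' (tendsto_orbitMean hg x).abs (abs_orbitAvg_le hg x)

lemma orbitMean_sub {f : ℝ → ℝ} {M' : ℝ} (hf : ∀ x, |f x| ≤ M) (hg : ∀ x, |g x| ≤ M') :
    orbitMean b (f - g) = orbitMean b f - orbitMean b g := by
  ext x
  have h : orbitAvg b (f - g) x = orbitAvg b f x - orbitAvg b g x := by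
    ext N; simp only [orbitAvg, Pi.sub_apply, sum_sub_distrib, sub_div]
  rw [orbitMean, h]
  exact ((tendsto_orbitMean hf x).sub (tendsto_orbitMean hg x)).limUnder_eq

lemma orbitMean_comp_add_right (b : ℝ) (g : ℝ → ℝ) (t x : ℝ) :
    orbitMean b (fun y => g (y + t)) x = orbitMean b g (x + t) := by
  unfold orbitMean
  congr 1; ext N
  simp only [orbitAvg, add_right_comm _ t]

lemma orbitMean_deltaOp (hg : ∀ x, |g x| ≤ M) (γ : ℝ) :
    orbitMean b (deltaOp γ g) = deltaOp γ (orbitMean b g) := by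
  ext x
  rw [show deltaOp γ g = (fun y => g (y + γ)) - g from rfl, orbitMean_sub (fun y => hg (y + γ)) hg,
    Pi.sub_apply, orbitMean_comp_add_right]
  rfl

lemma Function.Periodic.orbitMean {a : ℝ} (h : Periodic g a) (b : ℝ) :
    Periodic (orbitMean b g) a := fun x => by
  rw [← orbitMean_comp_add_right, h.funext]

lemma orbitMean_eq_self (h : Periodic g b) : orbitMean b g = g := by
  ext x
  refine orbitMean_eq_of_tendsto (tendsto_const_nhds.congr' ?_)
  filter_upwards [eventually_ne_atTop 0] with N hN
  simp only [orbitAvg, fun k : ℕ => h.nat_mul k x, sum_const, card_range, nsmul_eq_mul]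
  field_simp

lemma periodic_orbitMean (hg : ∀ x, |g x| ≤ M) : Periodic (orbitMean b g) b := fun x => by
  have h := congrFun (orbitMean_deltaOp hg b (b := b)) x
  rw [deltaOp, orbitMean_eq_of_tendsto (L := 0) ?_] at h
  · linarith
  -- The averages of `Δ_b g` telescope to `(g (x + N b) - g x) / N`.
  refine squeeze_zero_norm (a := fun N : ℕ => 2 * M / N) (fun N => ?_)
    (tendsto_const_div_atTop_nhds_zero_nat _)
  have htel := sum_range_sub (fun k : ℕ => g (x + k * b)) N
  simp only [Nat.cast_add, Nat.cast_one, add_one_mul, ← add_assoc] at htel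
  rw [Real.norm_eq_abs, orbitAvg, abs_div, Nat.abs_cast]
  simp only [deltaOp, htel, Nat.cast_zero, zero_mul, add_zero]
  exact div_le_div_of_nonneg_right ((abs_sub _ _).trans (by linarith [hg (x + N * b), hg x]))
    N.cast_nonneg

lemma continuous_orbitMean (hg : ∀ x, |g x| ≤ M) (huc : UniformContinuous g) :
    Continuous (orbitMean b g) := by
  refine Metric.continuous_iff.2 fun x ε hε => ?_
  obtain ⟨δ, hδ, hgδ⟩ := Metric.uniformContinuous_iff.1 huc (ε / 2) (half_pos hε)
  refine ⟨δ, hδ, fun y hy => ?_⟩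
  have hmean := congrFun (orbitMean_deltaOp hg (y - x) (b := b)) x
  simp only [deltaOp, add_sub_cancel] at hmean
  rw [Real.dist_eq, ← hmean]
  refine (abs_orbitMean_le (fun z => ?_) x).trans_lt (half_lt_self hε)
  rw [deltaOp, ← Real.dist_eq]
  refine (hgδ ?_).le
  rwa [Real.dist_eq, add_sub_cancel_left, ← Real.dist_eq]

end OrbitMean

lemma foldr_deltaOp_orbitMean (l : List ℝ) (b : ℝ) {f : ℝ → ℝ} (hf : ∃ C, ∀ x, |f x| ≤ C) :
    l.foldr deltaOp (orbitMean b f) = orbitMean b (l.foldr deltaOp f) :=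
  foldr_deltaOp_comm (P := fun g => ∃ C, ∀ x, |g x| ≤ C)
    (fun γ _ ⟨M, hM⟩ => ⟨2 * M, abs_deltaOp_le hM γ⟩)
    (fun γ _ ⟨_, hM⟩ => orbitMean_deltaOp hM γ) l hf

lemma orbitMean_eq_const {a β : ℝ} {H : ℝ → ℝ} (ha : a ≠ 0)
    (hdense : Dense (AddSubgroup.closure {β, a} : Set ℝ)) (hH : Continuous H) (hHa : Periodic H a)
    (x : ℝ) : orbitMean β H x = orbitMean β H 0 := by
  obtain ⟨M, hM⟩ := hHa.bounded_of_continuous ha hH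
  refine (continuous_orbitMean hM (hHa.uniformContinuous_of_continuous ha hH)).lowerSemicontinuous
    |>.eq_of_dense_periods hdense ?_ x 0
  rintro s (rfl | hs)
  · exact periodic_orbitMean hM
  · rw [Set.mem_singleton_iff.1 hs]
    exact hHa.orbitMean β

lemma sum_range_mul_sub_sum_range_mul (φ : ℝ → ℝ) (β x : ℝ) (p : ℕ) :
    ∑ k ∈ range p, (k : ℝ) * φ (x + β + k * β) - ∑ k ∈ range p, (k : ℝ) * φ (x + k * β) =
      p * φ (x + p * β) - ∑ k ∈ range p, φ (x + β + k * β) := by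
  induction p with
  | zero => simp
  | succ p ih =>
    simp only [sum_range_succ]
    rw [show x + ((p + 1 : ℕ) : ℝ) * β = x + β + p * β by push_cast; ring]
    push_cast
    linarith

/-- For `φ` with period `p β` and zero sum over `p` consecutive translates by `β`, this solves
`Δ_β G = φ`. -/
noncomputable def orbitRamp (β : ℝ) (p : ℕ) (φ : ℝ → ℝ) (x : ℝ) : ℝ :=
  (p : ℝ)⁻¹ * ∑ k ∈ range p, (k : ℝ) * φ (x + k * β)

section OrbitRamp

variable {β : ℝ} {p : ℕ} {φ : ℝ → ℝ}

lemma orbitRamp_deltaOp (γ : ℝ) : orbitRamp β p (deltaOp γ φ) = deltaOp γ (orbitRamp β p φ) := by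
  ext x
  simp only [orbitRamp, deltaOp, ← mul_sub, ← sum_sub_distrib, add_right_comm x γ]

lemma Continuous.orbitRamp (hφ : Continuous φ) : Continuous (orbitRamp β p φ) :=
  continuous_const.mul <| continuous_finsetSum _ fun _ _ =>
    continuous_const.mul (hφ.comp (continuous_add_const _))

lemma Function.Periodic.orbitRamp {a : ℝ} (h : Periodic φ a) : Periodic (orbitRamp β p φ) a :=
  fun x => by simp only [_root_.orbitRamp, add_right_comm x a, h _]

lemma deltaOp_orbitRamp_deltaOp {ψ : ℝ → ℝ} (hp : p ≠ 0) (hψ : Periodic ψ (p * β)) :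
    deltaOp β (orbitRamp β p (deltaOp β ψ)) = deltaOp β ψ := by
  ext x
  have hsum : ∑ k ∈ range p, deltaOp β ψ (x + β + k * β) = 0 := by
    have := sum_range_sub (fun k : ℕ => ψ (x + β + k * β)) p
    simp only [Nat.cast_add, Nat.cast_one, add_one_mul, ← add_assoc, Nat.cast_zero, zero_mul,
      add_zero, hψ _, sub_self] at this
    simpa only [deltaOp] using this
  have h := sum_range_mul_sub_sum_range_mul (deltaOp β ψ) β x p
  rw [hsum, sub_zero, (hψ.deltaOp β) x] at h
  have hp' : (p : ℝ) ≠ 0 := Nat.cast_ne_zero.2 hp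
  simp only [deltaOp, orbitRamp, ← mul_sub] at h ⊢
  rw [h]
  field_simp

end OrbitRamp

lemma foldr_deltaOp_orbitRamp (l : List ℝ) (β : ℝ) (p : ℕ) (φ : ℝ → ℝ) :
    l.foldr deltaOp (orbitRamp β p φ) = orbitRamp β p (l.foldr deltaOp φ) :=
  foldr_deltaOp_comm (P := fun _ => True) (fun _ _ _ => trivial)
    (fun γ _ _ => orbitRamp_deltaOp γ) l trivial

lemma exists_nat_mul_eq_intCast_mul {a β : ℝ} (ha : a ≠ 0) (h : ¬Irrational (β / a)) :
    ∃ p : ℕ, p ≠ 0 ∧ ∃ r : ℤ, p * β = r * a := by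
  obtain ⟨q, hq⟩ : ∃ q : ℚ, (q : ℝ) = β / a := by simpa [Irrational] using h
  refine ⟨q.den, q.den_ne_zero, q.num, ?_⟩
  rw [eq_div_iff ha, Rat.cast_def] at hq
  field_simp at hq
  linarith

theorem exists_continuous_periodic_foldr_deltaOp_eq {a : ℝ} (ha : a ≠ 0) (m : List ℝ)
    {u : ℝ → ℝ} (hu : ∃ C, ∀ x, |u x| ≤ C) (hua : Periodic u a)
    (hcont : Continuous (m.foldr deltaOp u)) :
    ∃ g, Continuous g ∧ Periodic g a ∧ m.foldr deltaOp g = m.foldr deltaOp u := by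
  induction m generalizing u with
  | nil => exact ⟨u, hcont, hua, rfl⟩
  | cons β m ih =>
    simp only [List.foldr_cons] at hcont ⊢
    set D := m.foldr deltaOp u
    obtain ⟨M, hM⟩ : ∃ M, ∀ x, |D x| ≤ M := foldr_deltaOp_bounded hu m
    have hDa : Periodic D a :=
      foldr_deltaOp_induction (P := (Periodic · a)) (fun γ _ h => h.deltaOp γ) m hua
    by_cases hirr : Irrational (β / a)
    · have hdense := dense_addSubgroupClosure_pair_iff.2 hirr
      have hH : Continuous (D - orbitSup D β) := continuous_sub_orbitSup hdense hM hDa hcont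
      have hΦa := hDa.orbitSup β
      have hmean : orbitMean β D = orbitMean β (D - orbitSup D β) + orbitSup D β := by
        rw [orbitMean_sub hM (abs_orbitSup_le hM), orbitMean_eq_self (periodic_orbitSup D β),
          sub_add_cancel]
      -- Subtracting the mean along `β` replaces `D` by `D - orbitSup D β` up to a constant.
      have hw : m.foldr deltaOp (u - orbitMean β u) =
          D - orbitSup D β - fun _ => orbitMean β (D - orbitSup D β) 0 := by
        ext x
        rw [foldr_deltaOp_sub, foldr_deltaOp_orbitMean m β hu, hmean]
        simp only [Pi.sub_apply, Pi.add_apply, orbitMean_eq_const ha hdense hH (hDa.sub hΦa) x]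
        ring
      obtain ⟨C, hC⟩ := hu
      obtain ⟨g, hg, hga, hgm⟩ := ih (u := u - orbitMean β u)
        ⟨2 * C, fun x => (abs_sub _ _).trans (by linarith [hC x, abs_orbitMean_le (b := β) hC x])⟩
        (hua.sub (hua.orbitMean β)) (hw ▸ hH.sub continuous_const)
      refine ⟨g, hg, hga, ?_⟩
      rw [hgm, hw]
      ext x
      simp only [deltaOp, Pi.sub_apply, periodic_orbitSup D β x]
      ring
    · obtain ⟨p, hp, r, hpr⟩ := exists_nat_mul_eq_intCast_mul ha hirr
      obtain ⟨C, hC⟩ := hu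
      obtain ⟨h, hh, hha, hhm⟩ := ih ⟨2 * C, abs_deltaOp_le hC β⟩ (hua.deltaOp β)
        (by rwa [foldr_deltaOp_deltaOp])
      refine ⟨orbitRamp β p h, hh.orbitRamp, hha.orbitRamp, ?_⟩
      rw [foldr_deltaOp_orbitRamp, hhm, foldr_deltaOp_deltaOp]
      exact deltaOp_orbitRamp_deltaOp hp (hpr ▸ hDa.int_mul r)

lemma exists_periodic_foldr_deltaOp_sub_eq_zero (l : List ℝ) (a : ℝ) {f : ℝ → ℝ}
    (hf : Continuous f) (hb : ∃ C, ∀ x, |f x| ≤ C) (h0 : deltaOp a (l.foldr deltaOp f) = 0) :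
    ∃ g, Continuous g ∧ (∃ C, ∀ x, |g x| ≤ C) ∧ Periodic g a ∧ l.foldr deltaOp (f - g) = 0 := by
  rcases eq_or_ne a 0 with rfl | ha
  · exact ⟨f, hf, hb, fun x => by rw [add_zero], by rw [foldr_deltaOp_sub, sub_self]⟩
  obtain ⟨C, hC⟩ := hb
  have hmean : l.foldr deltaOp (orbitMean a f) = l.foldr deltaOp f := by
    rw [foldr_deltaOp_orbitMean l a ⟨C, hC⟩, orbitMean_eq_self (deltaOp_eq_zero_iff.1 h0)]
  obtain ⟨g, hg, hga, hgl⟩ := exists_continuous_periodic_foldr_deltaOp_eq ha l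
    ⟨C, abs_orbitMean_le hC⟩ (periodic_orbitMean hC)
    (hmean ▸ foldr_deltaOp_induction (P := Continuous) (fun γ _ h => h.deltaOp γ) l hf)
  exact ⟨g, hg, hga.bounded_of_continuous ha hg, hga,
    by rw [foldr_deltaOp_sub, hgl, hmean, sub_self]⟩

theorem stmt_4_general (n : ℕ) (α : Fin n → ℝ) (f : ℝ → ℝ)
    (hbdd : ∃ C : ℝ, ∀ x, |f x| ≤ C) (hcont : Continuous f)
    (hdiff : (List.ofFn α).foldr deltaOp f = 0) :
    ∃ g : Fin n → ℝ → ℝ, (∀ j, Continuous (g j)) ∧ (∀ j, ∃ C : ℝ, ∀ x, |g j x| ≤ C) ∧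
      (∀ j x, g j (x + α j) = g j x) ∧ ∀ x, f x = ∑ j, g j x := by
  induction n generalizing f with
  | zero =>
    exact ⟨Fin.elim0, fun j => j.elim0, fun j => j.elim0, fun j => j.elim0,
      fun x => by simpa using congrFun hdiff x⟩
  | succ n ih =>
    rw [List.ofFn_succ, List.foldr_cons] at hdiff
    obtain ⟨g₀, hg₀, ⟨C₀, hC₀⟩, hp₀, hrest⟩ :=
      exists_periodic_foldr_deltaOp_sub_eq_zero _ _ hcont hbdd hdiff
    obtain ⟨C, hC⟩ := hbdd
    obtain ⟨g, hg, hb, hp, hsum⟩ := ih (fun i => α i.succ) (f - g₀)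
      ⟨C + C₀, fun x => (abs_sub _ _).trans (add_le_add (hC x) (hC₀ x))⟩ (hcont.sub hg₀) hrest
    refine ⟨Fin.cons g₀ g, Fin.cases hg₀ hg, Fin.cases ⟨C₀, hC₀⟩ hb, Fin.cases hp₀ hp, fun x => ?_⟩
    simp only [Fin.sum_univ_succ, Fin.cons_zero, Fin.cons_succ, ← hsum x, Pi.sub_apply]
    ring

theorem stmt_4 (n : ℕ) (hn : 1 ≤ n) (α : Fin n → ℝ) (f : ℝ → ℝ)
    (hbdd : ∃ C : ℝ, ∀ x, |f x| ≤ C) (hcont : Continuous f)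
    (hdiff : (List.ofFn α).foldr deltaOp f = 0) :
    ∃ g : Fin n → ℝ → ℝ, (∀ j, Continuous (g j)) ∧ (∀ j, ∃ C : ℝ, ∀ x, |g j x| ≤ C) ∧
      (∀ j x, g j (x + α j) = g j x) ∧ ∀ x, f x = ∑ j, g j x :=
  stmt_4_general n α f hbdd hcont hdiff
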